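/- The set of points (x,y) in the open triangle Δ = {(x,y) ∈ ℝ² : 1 > x > y > 0} for which there exists a sequence i : ℕ → {0,1} with (x,y) ∈ Δ_{(e,e,12)}(i₁,…,iₙ) for every n ≥ 1 and lim_{n→∞} (1/n)·#{k ≤ n : i_k = 1} = 1/2, has two-dimensional Lebesgue measure zero. (This is the key step showing that the Minkowski question mark analog Φ(e,e,12) is singular.) -/

import Mathlib

open Matrix MeasureTheory Filter

noncomputable section

/-- Projection π(a,b,c) = (b/a, c/a). -/
def projPt (v : Fin 3 → ℝ) : ℝ × ℝ := (v 1 / v 0, v 2 / v 0)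

def Vmat : Matrix (Fin 3) (Fin 3) ℝ := !![1,1,1; 0,1,1; 0,0,1]

def prodSeq (C : Fin 2 → Matrix (Fin 3) (Fin 3) ℝ) (i : ℕ → Fin 2) :
    ℕ → Matrix (Fin 3) (Fin 3) ℝ
  | 0 => 1
  | n + 1 => prodSeq C i n * C (i (n + 1))

/-- The subtriangle: convex hull of the π-images of the columns of V·C_{i₁}⋯C_{iₙ}. -/
def subTri (C : Fin 2 → Matrix (Fin 3) (Fin 3) ℝ) (i : ℕ → Fin 2) (n : ℕ) :
    Set (ℝ × ℝ) :=
  convexHull ℝ (Set.range fun j : Fin 3 => projPt fun k => (Vmat * prodSeq C i n) k j)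

/-- The Farey matrices F₀(e,e,12), F₁(e,e,12). -/
def Fee12 : Fin 2 → Matrix (Fin 3) (Fin 3) ℝ :=
  ![!![0,0,1; 1,0,0; 0,1,1], !![0,1,1; 1,0,0; 0,0,1]]

/-!
Write `(a, b, c)` for the first row of `V · F_w`. Since `V` and the `F_d` are unimodular, the
triangle of the word `w` has area at most `1 / (a b c)`, and appending the letter `0` resp. `1`
to `w` turns `(a, b, c)` into `(b, c, a + c)` resp. `(b, a, a + c)`. An explicit potential
`ψ(a, b, c) ≥ 1 / (a b c)` satisfies `2 ψ(b, c, a + c) + ψ(b, a, a + c) ≤ 5/4 ψ(a, b, c)`, so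
`∑_{|w| = n} 2^{-#ones(w)} ψ(w) ≤ (5/8)^n ψ(1, 1, 1)`. Hence the triangles of the words of length
`20 m` with at most `11 m` ones have total area `O((2^11 (5/8)^20)^m)`, which is summable; a point
with a sequence whose frequency of ones tends to `1/2` lies in one of them for all large `m`, and
Borel–Cantelli concludes.
-/

def potential (a b c : ℝ) : ℝ :=
  (40 * c ^ 2 + 66 * a * c + 50 * b * c - 33 * a ^ 2 - 18 * b ^ 2) / (40 * a * b * c ^ 3)

/-- `c⁵ · stepPolynomial (a/c) (b/c)` is the numerator of
`5/4 · ψ(a, b, c) - 2 ψ(b, c, a + c) - ψ(b, a, a + c)` over `160 a b c³ (a + c)³`. -/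
def stepPolynomial (x y : ℝ) : ℝ :=
  (40 - 166 * x + 97 * x ^ 2 + 375 * x ^ 3 - 165 * x ^ 4 - 165 * x ^ 5)
    + (-14 - 42 * x + 222 * x ^ 2 + 250 * x ^ 3) * y
    + (42 - 6 * x - 270 * x ^ 2 - 90 * x ^ 3) * y ^ 2

theorem stepPolynomial_nonneg {x y : ℝ} (hx0 : 0 ≤ x) (hx1 : x ≤ 1) (hy0 : 0 ≤ y) (hy1 : y ≤ 1) :
    0 ≤ stepPolynomial x y := by
  have h1 := sub_nonneg.2 hx1
  have := mul_nonneg (mul_nonneg hx0 hx0) hx0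
  have := mul_nonneg h1 (mul_nonneg (mul_nonneg hx0 hx0) (mul_nonneg hx0 hx0))
  have := mul_nonneg (mul_nonneg h1 h1) hx0
  have := mul_nonneg hx0 (sq_nonneg (x - 2 / 5))
  have := mul_nonneg (mul_nonneg hx0 hx0) (sq_nonneg (x - 2 / 5))
  have := mul_nonneg h1 (sq_nonneg (x - 2 / 5))
  -- the Bernstein coefficients of the quadratic in `y`
  have hA : 0 ≤ 40 - 166 * x + 97 * x ^ 2 + 375 * x ^ 3 - 165 * x ^ 4 - 165 * x ^ 5 := by
    nlinarith
  have hB : 0 ≤ 33 - 187 * x + 208 * x ^ 2 + 500 * x ^ 3 - 165 * x ^ 4 - 165 * x ^ 5 := by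
    nlinarith
  have hC : 0 ≤ 68 - 214 * x + 49 * x ^ 2 + 535 * x ^ 3 - 165 * x ^ 4 - 165 * x ^ 5 := by
    nlinarith
  unfold stepPolynomial
  linarith [mul_nonneg hA (sq_nonneg (1 - y)), mul_nonneg hB (mul_nonneg hy0 (sub_nonneg.2 hy1)),
    mul_nonneg hC (sq_nonneg y)]

theorem potential_step {a b c : ℝ} (ha : 0 < a) (hb : 0 < b) (hac : a ≤ c) (hbc : b ≤ c) :
    2 * potential b c (a + c) + potential b a (a + c) ≤ 5 / 4 * potential a b c := by
  have hc : 0 < c := ha.trans_le hac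
  have hQ : 0 ≤ stepPolynomial (a / c) (b / c) :=
    stepPolynomial_nonneg (by positivity) ((div_le_one hc).2 hac) (by positivity)
      ((div_le_one hc).2 hbc)
  have hD : 5 / 4 * potential a b c - (2 * potential b c (a + c) + potential b a (a + c))
      = c ^ 5 * stepPolynomial (a / c) (b / c) / (160 * a * b * c ^ 3 * (a + c) ^ 3) := by
    unfold potential stepPolynomial
    field_simp
    ring
  have : 0 ≤ c ^ 5 * stepPolynomial (a / c) (b / c) / (160 * a * b * c ^ 3 * (a + c) ^ 3) := by
    positivity
  linarith

theorem inv_mul_le_potential {a b c : ℝ} (ha : 0 < a) (hb : 0 < b) (hac : a ≤ c) (hbc : b ≤ c) :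
    1 / (a * b * c) ≤ potential a b c := by
  have hc : 0 < c := ha.trans_le hac
  have hnum : 40 * c ^ 2 ≤ 40 * c ^ 2 + 66 * a * c + 50 * b * c - 33 * a ^ 2 - 18 * b ^ 2 := by
    nlinarith [mul_nonneg ha.le (sub_nonneg.2 hac), mul_nonneg hb.le (sub_nonneg.2 hbc)]
  calc 1 / (a * b * c) = 40 * c ^ 2 / (40 * a * b * c ^ 3) := by field_simp
    _ ≤ potential a b c := by unfold potential; gcongr

open Pointwise in
theorem volume_convexHull_range_fin_three_le (p : Fin 3 → ℝ × ℝ) :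
    volume (convexHull ℝ (Set.range p)) ≤ ENNReal.ofReal
      |(p 1 - p 0).1 * (p 2 - p 0).2 - (p 2 - p 0).1 * (p 1 - p 0).2| := by
  let L : (ℝ × ℝ) →ₗ[ℝ] ℝ × ℝ := Matrix.toLin (Module.Basis.finTwoProd ℝ)
    (Module.Basis.finTwoProd ℝ) !![(p 1 - p 0).1, (p 2 - p 0).1; (p 1 - p 0).2, (p 2 - p 0).2]
  have hL : ∀ s t : ℝ, L (s, t) = s • (p 1 - p 0) + t • (p 2 - p 0) := by
    intro s t
    simp only [L, Matrix.toLin_finTwoProd_apply, Prod.ext_iff, Prod.fst_add, Prod.snd_add,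
      Prod.smul_fst, Prod.smul_snd, Prod.fst_sub, Prod.snd_sub, smul_eq_mul]
    constructor <;> ring
  have hsub : convexHull ℝ (Set.range p) ⊆ p 0 +ᵥ L '' Set.Icc 0 1 := by
    refine convexHull_min (Set.range_subset_iff.2 fun j => ?_)
      (((convex_Icc 0 1).linear_image L).vadd _)
    refine ⟨L (if j = 1 then 1 else 0, if j = 2 then 1 else 0), ⟨_, ?_, rfl⟩, ?_⟩
    · constructor <;> constructor <;> split_ifs <;> norm_num
    · fin_cases j <;> simp [hL]
  calc volume (convexHull ℝ (Set.range p))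
      ≤ volume (p 0 +ᵥ L '' Set.Icc 0 1) := measure_mono hsub
    _ = ENNReal.ofReal |LinearMap.det L| * volume (Set.Icc (0 : ℝ × ℝ) 1) := by
      rw [measure_vadd, Measure.addHaar_image_linearMap]
    _ = _ := by
      rw [LinearMap.det_toLin, Matrix.det_fin_two_of, Prod.zero_eq_mk, Prod.one_eq_mk,
        ← Set.Icc_prod_Icc, Measure.volume_eq_prod, Measure.prod_prod, Real.volume_Icc]
      norm_num

theorem volume_convexHull_projPt_columns_le (M : Matrix (Fin 3) (Fin 3) ℝ)
    (hM : ∀ j, M 0 j ≠ 0) :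
    volume (convexHull ℝ (Set.range fun j => projPt fun k => M k j)) ≤
      ENNReal.ofReal |M.det / (M 0 0 * M 0 1 * M 0 2)| := by
  refine (volume_convexHull_range_fin_three_le _).trans_eq (congrArg (ENNReal.ofReal ∘ abs) ?_)
  have := hM 0
  have := hM 1
  have := hM 2
  simp only [projPt, Prod.fst_sub, Prod.snd_sub, det_fin_three]
  field_simp
  ring

theorem prodSeq_eq_prod_ofFn (C : Fin 2 → Matrix (Fin 3) (Fin 3) ℝ) (i : ℕ → Fin 2) (n : ℕ) :
    prodSeq C i n = (List.ofFn fun k : Fin n => C (i (k + 1))).prod := by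
  induction n with
  | zero => rfl
  | succ n ih =>
    rw [prodSeq, ih, List.ofFn_succ', List.prod_concat]
    simp only [Fin.val_castSucc, Fin.val_last]

theorem mul_Fee12_zero_apply (P : Matrix (Fin 3) (Fin 3) ℝ) (r : Fin 3) :
    (P * Fee12 0) r = ![P r 1, P r 2, P r 0 + P r 2] := by
  ext j
  fin_cases j <;> simp [mul_apply, Fin.sum_univ_three, Fee12]

theorem mul_Fee12_one_apply (P : Matrix (Fin 3) (Fin 3) ℝ) (r : Fin 3) :
    (P * Fee12 1) r = ![P r 1, P r 0, P r 0 + P r 2] := by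
  ext j
  fin_cases j <;> simp [mul_apply, Fin.sum_univ_three, Fee12]

theorem abs_det_Fee12 (d : Fin 2) : |(Fee12 d).det| = 1 := by
  fin_cases d <;> simp [Fee12, det_fin_three]

section Words

variable {n : ℕ}

def wordMat (w : Fin n → Fin 2) : Matrix (Fin 3) (Fin 3) ℝ :=
  Vmat * (List.ofFn fun k => Fee12 (w k)).prod

def wordTri (w : Fin n → Fin 2) : Set (ℝ × ℝ) :=
  convexHull ℝ (Set.range fun j => projPt fun k => wordMat w k j)

def oneCount (w : Fin n → Fin 2) : ℕ :=
  (Finset.univ.filter fun j => w j = 1).card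

def wordWeight (w : Fin n → Fin 2) : ℝ :=
  potential (wordMat w 0 0) (wordMat w 0 1) (wordMat w 0 2) / 2 ^ oneCount w

theorem subTri_eq_wordTri (i : ℕ → Fin 2) (n : ℕ) :
    subTri Fee12 i n = wordTri fun k : Fin n => i (k + 1) := by
  rw [subTri, prodSeq_eq_prod_ofFn]
  rfl

theorem oneCount_eq_card_range (i : ℕ → Fin 2) (n : ℕ) :
    oneCount (fun k : Fin n => i (k + 1)) =
      ((Finset.range n).filter fun k => i (k + 1) = 1).card := by
  rw [oneCount, Finset.card_filter, Finset.card_filter]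
  exact Fin.sum_univ_eq_sum_range (fun k => if i (k + 1) = 1 then 1 else 0) n

theorem wordMat_snoc (w : Fin n → Fin 2) (d : Fin 2) :
    wordMat (Fin.snoc w d) = wordMat w * Fee12 d := by
  rw [wordMat, wordMat, List.ofFn_succ', List.prod_concat, mul_assoc]
  simp only [Fin.snoc_castSucc, Fin.snoc_last]

theorem oneCount_snoc (w : Fin n → Fin 2) (d : Fin 2) :
    oneCount (Fin.snoc w d) = oneCount w + if d = 1 then 1 else 0 := by
  rw [oneCount, oneCount, Finset.card_filter, Finset.card_filter, Fin.sum_univ_castSucc]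
  simp

theorem abs_det_wordMat (w : Fin n → Fin 2) : |(wordMat w).det| = 1 := by
  induction w using Fin.snocInduction with
  | elim0 => simp [wordMat, Vmat, det_fin_three]
  | snoc w d ih => rw [wordMat_snoc, det_mul, abs_mul, ih, abs_det_Fee12, one_mul]

theorem wordMat_firstRow_bounds (w : Fin n → Fin 2) :
    0 < wordMat w 0 0 ∧ 0 < wordMat w 0 1 ∧
      wordMat w 0 0 ≤ wordMat w 0 2 ∧ wordMat w 0 1 ≤ wordMat w 0 2 := by
  induction w using Fin.snocInduction with
  | elim0 => simp [wordMat, Vmat]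
  | snoc w d ih =>
    obtain ⟨ha, hb, hac, hbc⟩ := ih
    fin_cases d
    · simp only [Fin.zero_eta, wordMat_snoc, mul_Fee12_zero_apply, cons_val_zero, cons_val_one,
        cons_val]
      exact ⟨hb, by linarith, by linarith, by linarith⟩
    · simp only [Fin.mk_one, wordMat_snoc, mul_Fee12_one_apply, cons_val_zero, cons_val_one,
        cons_val]
      exact ⟨hb, ha, by linarith, by linarith⟩

theorem wordWeight_pos (w : Fin n → Fin 2) : 0 < wordWeight w := by
  obtain ⟨ha, hb, hac, hbc⟩ := wordMat_firstRow_bounds w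
  have hc := ha.trans_le hac
  exact div_pos ((by positivity : (0 : ℝ) < 1 / _).trans_le (inv_mul_le_potential ha hb hac hbc))
    (by positivity)

theorem wordWeight_snoc_add_le (w : Fin n → Fin 2) :
    wordWeight (Fin.snoc w 0) + wordWeight (Fin.snoc w 1) ≤ 5 / 8 * wordWeight w := by
  obtain ⟨ha, hb, hac, hbc⟩ := wordMat_firstRow_bounds w
  have hstep := potential_step ha hb hac hbc
  simp only [wordWeight, wordMat_snoc, mul_Fee12_zero_apply, mul_Fee12_one_apply, oneCount_snoc,
    cons_val_zero, cons_val_one, cons_val, zero_ne_one, if_false, if_true, add_zero]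
  rw [pow_succ, ← div_div, div_right_comm _ _ 2, ← add_div, ← mul_div_assoc,
    div_le_div_iff_of_pos_right (by positivity)]
  linarith

theorem sum_wordWeight_le (n : ℕ) :
    ∑ w : Fin n → Fin 2, wordWeight w ≤ 21 / 8 * (5 / 8) ^ n := by
  induction n with
  | zero => norm_num [wordWeight, oneCount, wordMat, Vmat, potential, cons_val_two]
  | succ n ih =>
    calc ∑ w : Fin (n + 1) → Fin 2, wordWeight w
        = ∑ w : Fin n → Fin 2, (wordWeight (Fin.snoc w 0) + wordWeight (Fin.snoc w 1)) := by
          rw [← (Fin.snocEquiv fun _ => Fin 2).sum_comp, Fintype.sum_prod_type, Fin.sum_univ_two]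
          rw [Finset.sum_add_distrib]
          rfl
      _ ≤ ∑ w : Fin n → Fin 2, 5 / 8 * wordWeight w :=
          Finset.sum_le_sum fun w _ => wordWeight_snoc_add_le w
      _ ≤ 21 / 8 * (5 / 8) ^ (n + 1) := by
          rw [← Finset.mul_sum, pow_succ]
          nlinarith

theorem volume_wordTri_le (w : Fin n → Fin 2) :
    volume (wordTri w) ≤ ENNReal.ofReal (2 ^ oneCount w * wordWeight w) := by
  obtain ⟨ha, hb, hac, hbc⟩ := wordMat_firstRow_bounds w
  have hc := ha.trans_le hac
  refine (volume_convexHull_projPt_columns_le _ ?_).trans (ENNReal.ofReal_le_ofReal ?_)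
  · intro j
    fin_cases j <;> simp only [Fin.zero_eta, Fin.mk_one, Fin.reduceFinMk] <;> positivity
  · rw [abs_div, abs_det_wordMat, abs_of_pos (by positivity), wordWeight,
      mul_div_cancel₀ _ (by positivity)]
    exact inv_mul_le_potential ha hb hac hbc

variable (n) in
def coverSet (k : ℕ) : Set (ℝ × ℝ) :=
  ⋃ w ∈ Finset.univ.filter fun w : Fin n → Fin 2 => oneCount w ≤ k, wordTri w

theorem volume_coverSet_le (k : ℕ) :
    volume (coverSet n k) ≤ ENNReal.ofReal (21 / 8 * 2 ^ k * (5 / 8) ^ n) := by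
  have hweight : ∀ w : Fin n → Fin 2, 0 ≤ wordWeight w := fun w => (wordWeight_pos w).le
  calc volume (coverSet n k)
      ≤ ∑ w ∈ Finset.univ.filter (fun w : Fin n → Fin 2 => oneCount w ≤ k), volume (wordTri w) :=
        measure_biUnion_finset_le _ _
    _ ≤ ∑ w ∈ Finset.univ.filter (fun w : Fin n → Fin 2 => oneCount w ≤ k),
          ENNReal.ofReal (2 ^ k * wordWeight w) := by
        refine Finset.sum_le_sum fun w hw => (volume_wordTri_le w).trans ?_
        gcongr
        · exact hweight w
        · norm_num
        · exact (Finset.mem_filter.1 hw).2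
    _ = ENNReal.ofReal (2 ^ k * ∑ w ∈ Finset.univ.filter (fun w : Fin n → Fin 2 => oneCount w ≤ k),
          wordWeight w) := by
        rw [Finset.mul_sum,
          ENNReal.ofReal_sum_of_nonneg fun w _ => mul_nonneg (by positivity) (hweight w)]
    _ ≤ _ := by
        refine ENNReal.ofReal_le_ofReal ?_
        rw [mul_assoc, mul_left_comm]
        gcongr
        exact (Finset.sum_le_sum_of_subset_of_nonneg (Finset.filter_subset _ _)
          fun w _ _ => hweight w).trans (sum_wordWeight_le n)

theorem subTri_subset_coverSet (i : ℕ → Fin 2) (k : ℕ)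
    (hk : ((Finset.range n).filter fun j => i (j + 1) = 1).card ≤ k) :
    subTri Fee12 i n ⊆ coverSet n k := by
  rw [subTri_eq_wordTri]
  exact Set.subset_biUnion_of_mem (u := wordTri) (Finset.mem_filter.2
    ⟨Finset.mem_univ _, (oneCount_eq_card_range i n).trans_le hk⟩)

end Words

theorem eventually_le_of_tendsto_div {a : ℕ → ℕ} {ℓ : ℝ} {p q : ℕ} (hq : 0 < q)
    (hℓ : ℓ < p / q) (h : Tendsto (fun n => (a n : ℝ) / n) atTop (nhds ℓ)) :
    ∀ᶠ m in atTop, a (q * m) ≤ p * m := by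
  filter_upwards [(h.comp (tendsto_id.const_mul_atTop' hq)).eventually (gt_mem_nhds hℓ),
    eventually_ge_atTop 1] with m hm hm1
  have hq' : (0 : ℝ) < q := by exact_mod_cast hq
  have hm' : (0 : ℝ) < m := by exact_mod_cast hm1
  simp only [Function.comp_apply, id, Nat.cast_mul] at hm
  rw [div_lt_div_iff₀ (by positivity) hq'] at hm
  have : (a (q * m) : ℝ) < p * m := by nlinarith
  exact_mod_cast this.le

-- Any `k / n` in `(1/2, log₂ (8/5))` would do: it only has to make `2 ^ k (5/8) ^ n < 1`.
theorem tsum_volume_coverSet_ne_top : ∑' m, volume (coverSet (20 * m) (11 * m)) ≠ ⊤ := by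
  have hr : (2 : ℝ) ^ 11 * (5 / 8) ^ 20 < 1 := by norm_num
  have hsum : Summable fun m : ℕ => 21 / 8 * ((2 : ℝ) ^ 11 * (5 / 8) ^ 20) ^ m :=
    (summable_geometric_of_lt_one (by positivity) hr).mul_left _
  refine ne_top_of_le_ne_top ?_ (ENNReal.tsum_le_tsum fun m => volume_coverSet_le _)
  simp_rw [pow_mul, mul_assoc, ← mul_pow]
  rw [← ENNReal.ofReal_tsum_of_nonneg (fun m => by positivity) hsum]
  exact ENNReal.ofReal_ne_top

theorem stmt15 :
    volume {z : ℝ × ℝ | (z.2 < z.1 ∧ z.1 < 1 ∧ 0 < z.2) ∧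
      ∃ i : ℕ → Fin 2,
        (∀ n : ℕ, 1 ≤ n → z ∈ subTri Fee12 i n) ∧
        Tendsto
          (fun n : ℕ =>
            (((Finset.range n).filter fun k => i (k + 1) = 1).card : ℝ) / n)
          atTop (nhds (1 / 2))} = 0 := by
  refine measure_mono_null (fun z hz => ?_) (measure_setOfPred_frequently_eq_zero
    (p := fun m z => z ∈ coverSet (20 * m) (11 * m)) tsum_volume_coverSet_ne_top)
  obtain ⟨-, i, hmem, hfreq⟩ := hz
  have hones := eventually_le_of_tendsto_div (p := 11) (q := 20) (by norm_num) (by norm_num) hfreq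
  refine (hones.and (eventually_ge_atTop 1)).frequently.mono fun m ⟨hm, hm1⟩ => ?_
  exact subTri_subset_coverSet i _ hm (hmem _ (by omega))
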